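/- Let (A ⊆ B) be a subgroup embedding with B free abelian of finite rank, viewed as a Gorenstein-projective Z[ε]-module. Then the total number of indecomposable summands in any direct sum decomposition into indecomposables equals rank B = dim_Q(B ⊗ Q), and the multiplicity of the summand (0 ⊆ Z) equals dim_Q((B/A) ⊗ Q). In particular these quantities are independent of the chosen decomposition. -/

import Mathlib

/-!
An isomorphism of `ℤ[ε]`-modules commutes with `ε`, so it matches the kernels `0 × B` and the
images `0 × A` of `ε` on both sides. For `(A ⊆ B) ≅ ⊕ᵢ (Iᵢ ⊆ ℤ)` this gives `B ≅ ℤᵏ` and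
`B ⧸ A ≅ ⊕ᵢ ℤ ⧸ Iᵢ`. Tensoring with `ℚ` computes the rank over `ℤ`, and `ℤ ⧸ Iᵢ` has rank `1`
if `Iᵢ = 0` and is torsion otherwise.
-/

open TensorProduct

/-- The differential of the Gorenstein-projective `ℤ[ε]`-module associated with a
subgroup embedding `A ⊆ B`: on the underlying group `A × B`, `ε · (a, b) = (0, a)`. -/
def eEmb {B : Type*} [AddCommGroup B] [Module ℤ B] (A : Submodule ℤ B) :
    (A × B) →ₗ[ℤ] (A × B) where
  toFun x := (0, (x.1 : B))
  map_add' x y := by simp [Prod.ext_iff]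
  map_smul' c x := by simp [Prod.ext_iff]

open Module

@[simp]
lemma eEmb_apply {B : Type*} [AddCommGroup B] {A : Submodule ℤ B} (x : A × B) :
    eEmb A x = (0, (x.1 : B)) :=
  rfl

namespace eEmb

section Equiv

variable {B B' : Type*} [AddCommGroup B] [AddCommGroup B']
  {A : Submodule ℤ B} {A' : Submodule ℤ B'}

lemma eq_zero_iff {x : A × B} : eEmb A x = 0 ↔ x.1 = 0 := by
  simp [Prod.ext_iff]

lemma mem_iff_exists_eq {b : B} : b ∈ A ↔ ∃ x, eEmb A x = (0, b) := by
  refine ⟨fun hb => ⟨(⟨b, hb⟩, 0), rfl⟩, ?_⟩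
  rintro ⟨x, hx⟩
  simp only [eEmb_apply, Prod.mk.injEq, true_and] at hx
  exact hx ▸ x.1.2

variable (φ : (A × B) ≃ₗ[ℤ] (A' × B')) (hφ : ∀ x, φ (eEmb A x) = eEmb A' (φ x))
include hφ

lemma fst_map_eq_zero_iff {x : A × B} : (φ x).1 = 0 ↔ x.1 = 0 := by
  rw [← eq_zero_iff, ← eq_zero_iff, ← hφ, LinearEquiv.map_eq_zero_iff]

lemma map_inr (b : B) : φ (0, b) = (0, (φ (0, b)).2) :=
  Prod.ext ((fst_map_eq_zero_iff φ hφ).2 rfl) rfl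

/-- `φ` restricts to an isomorphism between the kernels `0 × B` and `0 × B'` of `ε`. -/
noncomputable def ambientEquiv : B ≃ₗ[ℤ] B' :=
  LinearEquiv.ofBijective (LinearMap.snd ℤ A' B' ∘ₗ φ.toLinearMap ∘ₗ LinearMap.inr ℤ A B) <| by
    refine ⟨(injective_iff_map_eq_zero _).2 fun b hb => ?_, fun b' => ?_⟩
    · have h0 : φ (0, b) = 0 := by rw [map_inr φ hφ b]; exact Prod.ext rfl hb
      exact congrArg Prod.snd (φ.map_eq_zero_iff.1 h0)
    · have hx : (φ.symm (0, b')).1 = 0 := by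
        rw [← fst_map_eq_zero_iff φ hφ, φ.apply_symm_apply]
      refine ⟨(φ.symm (0, b')).2, ?_⟩
      change (φ (0, (φ.symm (0, b')).2)).2 = b'
      rw [show ((0 : A), (φ.symm (0, b')).2) = φ.symm (0, b') from Prod.ext hx.symm rfl,
        φ.apply_symm_apply]

lemma ambientEquiv_apply (b : B) : ambientEquiv φ hφ b = (φ (0, b)).2 := rfl

lemma mem_iff_ambientEquiv_mem {b : B} : b ∈ A ↔ ambientEquiv φ hφ b ∈ A' := by
  rw [mem_iff_exists_eq, mem_iff_exists_eq, ambientEquiv_apply, ← map_inr φ hφ]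
  refine ⟨fun ⟨x, hx⟩ => ⟨φ x, by rw [← hφ, hx]⟩, fun ⟨y, hy⟩ => ⟨φ.symm y, ?_⟩⟩
  exact φ.injective (by rw [hφ, φ.apply_symm_apply, hy])

lemma map_ambientEquiv : A.map (ambientEquiv φ hφ : B →ₗ[ℤ] B') = A' := by
  ext b'
  rw [Submodule.mem_map_equiv, mem_iff_ambientEquiv_mem φ hφ, LinearEquiv.apply_symm_apply]

noncomputable def quotientEquiv : (B ⧸ A) ≃ₗ[ℤ] (B' ⧸ A') :=
  Submodule.Quotient.equiv A A' (ambientEquiv φ hφ) (map_ambientEquiv φ hφ)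

end Equiv

section Pi

variable {ι : Type*} {C : ι → Type*} [∀ i, AddCommGroup (C i)]
  (I : ∀ i, Submodule ℤ (C i))

def piProdEquiv : (∀ i, I i × C i) ≃ₗ[ℤ] Submodule.pi Set.univ I × (∀ i, C i) where
  toFun y := (⟨fun i => (y i).1, fun i _ => (y i).1.2⟩, fun i => (y i).2)
  invFun z := fun i => (⟨z.1.1 i, z.1.2 i trivial⟩, z.2 i)
  map_add' _ _ := rfl
  map_smul' _ _ := rfl
  left_inv _ := rfl
  right_inv _ := rfl

lemma piProdEquiv_eEmb (y : ∀ i, I i × C i) :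
    piProdEquiv I (fun i => eEmb (I i) (y i)) = eEmb (Submodule.pi Set.univ I) (piProdEquiv I y) :=
  rfl

end Pi

end eEmb

theorem finrank_rat_tensor_eq_finrank_int (M : Type*) [AddCommGroup M] [Module ℤ M] :
    finrank ℚ (ℚ ⊗[ℤ] M) = finrank ℤ M :=
  (TensorProduct.isBaseChange ℤ M ℚ).finrank_eq

/-- Unlike `Module.finrank_pi_fintype`, this needs no freeness. -/
theorem finrank_int_pi {ι : Type*} [Fintype ι] (M : ι → Type*) [∀ i, AddCommGroup (M i)]
    [∀ i, Module.Finite ℤ (M i)] :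
    finrank ℤ (∀ i, M i) = ∑ i, finrank ℤ (M i) := by
  classical
  rw [← finrank_rat_tensor_eq_finrank_int, (TensorProduct.piRight ℤ ℚ ℚ M).finrank_eq,
    Module.finrank_pi_fintype]
  simp_rw [finrank_rat_tensor_eq_finrank_int]

open Classical in
theorem finrank_int_quotient (I : Submodule ℤ ℤ) :
    finrank ℤ (ℤ ⧸ I) = if I = ⊥ then 1 else 0 := by
  split_ifs with h
  · rw [(Submodule.quotEquivOfEqBot I h).finrank_eq, Module.finrank_self]
  · obtain ⟨n, hn, hn0⟩ := Submodule.exists_mem_ne_zero_of_ne_bot h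
    refine Module.finrank_eq_zero_iff.2 fun x => ⟨n, hn0, ?_⟩
    induction x using Submodule.Quotient.induction_on with
    | H m =>
      rw [← Submodule.Quotient.mk_smul, Submodule.Quotient.mk_eq_zero, smul_eq_mul, mul_comm]
      exact I.smul_mem m hn

theorem stmt9 (B : Type) [AddCommGroup B] [Module ℤ B]
    (A : Submodule ℤ B) (k : ℕ) (I : Fin k → Submodule ℤ ℤ)
    (φ : (A × B) ≃ₗ[ℤ] ((i : Fin k) → ((I i) × ℤ)))
    (hφ : ∀ x (i : Fin k), φ (eEmb A x) i = eEmb (I i) (φ x i)) :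
    k = Module.finrank ℚ (ℚ ⊗[ℤ] B) ∧
    Nat.card {i : Fin k // I i = ⊥} = Module.finrank ℚ (ℚ ⊗[ℤ] (B ⧸ A)) := by
  -- with the canonical `ℤ`-module structure on `B`, all derived instances agree with `toIntModule`
  obtain rfl : ‹Module ℤ B› = AddCommGroup.toIntModule B := Subsingleton.elim _ _
  set ψ := φ.trans (eEmb.piProdEquiv I)
  have hψ : ∀ x, ψ (eEmb A x) = eEmb _ (ψ x) := fun x => by
    rw [LinearEquiv.trans_apply, LinearEquiv.trans_apply, ← eEmb.piProdEquiv_eEmb]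
    exact congrArg _ (funext (hφ x))
  refine ⟨?_, ?_⟩
  · rw [finrank_rat_tensor_eq_finrank_int, (eEmb.ambientEquiv ψ hψ).finrank_eq,
      Module.finrank_fin_fun]
  · rw [finrank_rat_tensor_eq_finrank_int,
      ((eEmb.quotientEquiv ψ hψ).trans (Submodule.quotientPi I)).finrank_eq, finrank_int_pi]
    simp [finrank_int_quotient, Finset.sum_boole, Fintype.card_subtype]
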